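/- Let A, B, C, D be bounded operators forming a 2×2 block operator 𝔸 on X₁ × X₂, and suppose λ - A and λ - D are invertible. If ‖B(λ-D)⁻¹C(λ-A)⁻¹‖ < 1 or ‖C(λ-A)⁻¹B(λ-D)⁻¹‖ < 1, then λ - 𝔸 is invertible. Consequently σ(𝔸) ⊆ σ(A) ∪ σ(D) ∪ { λ : ‖B(λ-D)⁻¹C(λ-A)⁻¹‖ ≥ 1 and ‖C(λ-A)⁻¹B(λ-D)⁻¹‖ ≥ 1 }. -/

import Mathlib

/-!
With `S = λ - A` and `T = λ - D`, the operator `λ - 𝔸` is the block operator `[[S, -B], [-C, T]]`.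
As `T` is invertible, the block LDU factorization
`[[S, Q], [R, T]] = [[1, Q T⁻¹], [0, 1]] · [[S - Q T⁻¹ R, 0], [0, T]] · [[1, 0], [T⁻¹ R, 1]]`
reduces the invertibility of `λ - 𝔸` to that of the Schur complement
`S - B T⁻¹ C = (1 - B T⁻¹ C S⁻¹) S`, which follows from the Neumann series when
`‖B T⁻¹ C S⁻¹‖ < 1`. Conjugating by the swap `X₁ × X₂ ≃ X₂ × X₁` exchanges `(A, B)` with
`(D, C)` and gives the other case.
-/

open ContinuousLinearMap

theorem isUnit_sub_of_norm_mul_lt_one {R : Type*} [NormedRing R] [HasSummableGeomSeries R]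
    {s s' k : R} (hs₁ : s * s' = 1) (hs₂ : s' * s = 1) (hk : ‖k * s'‖ < 1) :
    IsUnit (s - k) := by
  have hfactor : s - k = (1 - k * s') * s := by rw [sub_mul, one_mul, mul_assoc, hs₂, mul_one]
  rw [hfactor]
  exact (isUnit_one_sub_of_norm_lt_one hk).mul ⟨⟨s, s', hs₁, hs₂⟩, rfl⟩

section BlockOperator

variable {𝕜 : Type*} [NontriviallyNormedField 𝕜]
  {E₁ E₂ F₁ F₂ G₁ G₂ : Type*}
  [NormedAddCommGroup E₁] [NormedSpace 𝕜 E₁] [NormedAddCommGroup E₂] [NormedSpace 𝕜 E₂]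
  [NormedAddCommGroup F₁] [NormedSpace 𝕜 F₁] [NormedAddCommGroup F₂] [NormedSpace 𝕜 F₂]
  [NormedAddCommGroup G₁] [NormedSpace 𝕜 G₁] [NormedAddCommGroup G₂] [NormedSpace 𝕜 G₂]

def blockOp (P : E₁ →L[𝕜] F₁) (Q : E₂ →L[𝕜] F₁) (R : E₁ →L[𝕜] F₂) (S : E₂ →L[𝕜] F₂) :
    E₁ × E₂ →L[𝕜] F₁ × F₂ :=
  (P.coprod Q).prod (R.coprod S)

@[simp]
theorem blockOp_apply (P : E₁ →L[𝕜] F₁) (Q : E₂ →L[𝕜] F₁) (R : E₁ →L[𝕜] F₂)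
    (S : E₂ →L[𝕜] F₂) (x : E₁ × E₂) :
    blockOp P Q R S x = (P x.1 + Q x.2, R x.1 + S x.2) :=
  rfl

theorem blockOp_comp_blockOp (P : F₁ →L[𝕜] G₁) (Q : F₂ →L[𝕜] G₁) (R : F₁ →L[𝕜] G₂)
    (S : F₂ →L[𝕜] G₂) (P' : E₁ →L[𝕜] F₁) (Q' : E₂ →L[𝕜] F₁) (R' : E₁ →L[𝕜] F₂)
    (S' : E₂ →L[𝕜] F₂) :
    blockOp P Q R S ∘L blockOp P' Q' R' S' =
      blockOp (P ∘L P' + Q ∘L R') (P ∘L Q' + Q ∘L S')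
        (R ∘L P' + S ∘L R') (R ∘L Q' + S ∘L S') := by
  ext x <;> simp only [comp_apply, blockOp_apply, add_apply, map_add] <;> abel

@[simp]
theorem blockOp_one_zero_zero_one :
    blockOp (1 : E₁ →L[𝕜] E₁) 0 0 (1 : E₂ →L[𝕜] E₂) = 1 := by
  ext x <;> simp

theorem isUnit_blockOp_upper (Q : E₂ →L[𝕜] E₁) : IsUnit (blockOp 1 Q (0 : E₁ →L[𝕜] E₂) 1) :=
  isUnit_iff_exists.mpr ⟨blockOp 1 (-Q) 0 1, by ext <;> simp, by ext <;> simp⟩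

theorem isUnit_blockOp_lower (R : E₁ →L[𝕜] E₂) : IsUnit (blockOp 1 (0 : E₂ →L[𝕜] E₁) R 1) :=
  isUnit_iff_exists.mpr ⟨blockOp 1 0 (-R) 1, by ext <;> simp, by ext <;> simp⟩

theorem IsUnit.blockOp_diag {P : E₁ →L[𝕜] E₁} {S : E₂ →L[𝕜] E₂} (hP : IsUnit P)
    (hS : IsUnit S) : IsUnit (blockOp P 0 0 S) := by
  obtain ⟨u, rfl⟩ := hP
  obtain ⟨v, rfl⟩ := hS
  refine isUnit_iff_exists.mpr ⟨blockOp ↑u⁻¹ 0 0 ↑v⁻¹, ?_, ?_⟩ <;>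
    rw [mul_def, blockOp_comp_blockOp] <;>
    simp only [comp_zero, zero_comp, add_zero, zero_add, ← mul_def, Units.mul_inv, Units.inv_mul,
      blockOp_one_zero_zero_one]

theorem smul_one_sub_blockOp (c : 𝕜) (P : E₁ →L[𝕜] E₁) (Q : E₂ →L[𝕜] E₁) (R : E₁ →L[𝕜] E₂)
    (S : E₂ →L[𝕜] E₂) :
    c • 1 - blockOp P Q R S = blockOp (c • 1 - P) (-Q) (-R) (c • 1 - S) := by
  ext x <;> simp

theorem isUnit_blockOp_of_isUnit_schur {S : E₁ →L[𝕜] E₁} {Q : E₂ →L[𝕜] E₁} {R : E₁ →L[𝕜] E₂}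
    {T T' : E₂ →L[𝕜] E₂} (hT₁ : T ∘L T' = 1) (hT₂ : T' ∘L T = 1)
    (hschur : IsUnit (S - Q ∘L T' ∘L R)) : IsUnit (blockOp S Q R T) := by
  have hLDU : blockOp S Q R T =
      blockOp 1 (Q ∘L T') 0 1 * blockOp (S - Q ∘L T' ∘L R) 0 0 T * blockOp 1 0 (T' ∘L R) 1 := by
    have hTT' (y : E₂) : T (T' y) = y := DFunLike.congr_fun hT₁ y
    have hT'T (y : E₂) : T' (T y) = y := DFunLike.congr_fun hT₂ y
    ext x <;> simp [hTT', hT'T]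
  rw [hLDU]
  exact ((isUnit_blockOp_upper _).mul (hschur.blockOp_diag ⟨⟨T, T', hT₁, hT₂⟩, rfl⟩)).mul
    (isUnit_blockOp_lower _)

theorem isUnit_blockOp_of_norm_lt_one [CompleteSpace E₁] {S S' : E₁ →L[𝕜] E₁}
    {Q : E₂ →L[𝕜] E₁} {R : E₁ →L[𝕜] E₂} {T T' : E₂ →L[𝕜] E₂} (hS₁ : S ∘L S' = 1)
    (hS₂ : S' ∘L S = 1) (hT₁ : T ∘L T' = 1) (hT₂ : T' ∘L T = 1)
    (h : ‖Q ∘L T' ∘L R ∘L S'‖ < 1) : IsUnit (blockOp S Q R T) :=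
  isUnit_blockOp_of_isUnit_schur hT₁ hT₂ (isUnit_sub_of_norm_mul_lt_one hS₁ hS₂ h)

theorem conjContinuousAlgEquiv_prodComm_blockOp (P : E₁ →L[𝕜] E₁) (Q : E₂ →L[𝕜] E₁)
    (R : E₁ →L[𝕜] E₂) (S : E₂ →L[𝕜] E₂) :
    (ContinuousLinearEquiv.prodComm 𝕜 E₁ E₂).conjContinuousAlgEquiv (blockOp P Q R S) =
      blockOp S R Q P := by
  ext x <;> simp [add_comm]

theorem isUnit_blockOp_swap_iff {P : E₁ →L[𝕜] E₁} {Q : E₂ →L[𝕜] E₁} {R : E₁ →L[𝕜] E₂}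
    {S : E₂ →L[𝕜] E₂} : IsUnit (blockOp S R Q P) ↔ IsUnit (blockOp P Q R S) := by
  rw [← conjContinuousAlgEquiv_prodComm_blockOp, isUnit_map_iff]

end BlockOperator

/-- Improved 2×2 Schur-set localization using both Schur complements: if
`λ - A`, `λ - D` are invertible and `‖B(λ-D)⁻¹C(λ-A)⁻¹‖ < 1` or
`‖C(λ-A)⁻¹B(λ-D)⁻¹‖ < 1`, then `λ - 𝔸` is invertible. -/
theorem two_by_two_schur_set_localization_symmetric
    {X₁ X₂ : Type*} [NormedAddCommGroup X₁] [NormedSpace ℂ X₁] [CompleteSpace X₁]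
    [NormedAddCommGroup X₂] [NormedSpace ℂ X₂] [CompleteSpace X₂]
    (A : X₁ →L[ℂ] X₁) (B : X₂ →L[ℂ] X₁) (C : X₁ →L[ℂ] X₂) (D : X₂ →L[ℂ] X₂)
    (𝔸 : (X₁ × X₂) →L[ℂ] (X₁ × X₂))
    (h𝔸 : ∀ x y, 𝔸 (x, y) = (A x + B y, C x + D y))
    (lam : ℂ)
    (A' : X₁ →L[ℂ] X₁)
    (hA1 : (lam • (1 : X₁ →L[ℂ] X₁) - A) ∘L A' = 1)
    (hA2 : A' ∘L (lam • (1 : X₁ →L[ℂ] X₁) - A) = 1)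
    (D' : X₂ →L[ℂ] X₂)
    (hD1 : (lam • (1 : X₂ →L[ℂ] X₂) - D) ∘L D' = 1)
    (hD2 : D' ∘L (lam • (1 : X₂ →L[ℂ] X₂) - D) = 1)
    (hnorm : ‖B ∘L D' ∘L C ∘L A'‖ < 1 ∨ ‖C ∘L A' ∘L B ∘L D'‖ < 1) :
    IsUnit (lam • (1 : (X₁ × X₂) →L[ℂ] (X₁ × X₂)) - 𝔸) := by
  have hblock : 𝔸 = blockOp A B C D := ContinuousLinearMap.ext fun ⟨x, y⟩ ↦ h𝔸 x y
  rw [hblock, smul_one_sub_blockOp]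
  rcases hnorm with h | h
  · exact isUnit_blockOp_of_norm_lt_one hA1 hA2 hD1 hD2 (by simpa using h)
  · exact isUnit_blockOp_swap_iff.mp
      (isUnit_blockOp_of_norm_lt_one hD1 hD2 hA1 hA2 (by simpa using h))
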